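/- Let d ≥ 1 and R > 0, let μ be a probability measure on ℝᵈ absolutely continuous with respect to Lebesgue measure and satisfying μ({y : ‖y‖ ≥ R}) = 1, and let σ ∈ [0,1]. If there exists v₁ ∈ ℝᵈ with μ({y : ‖y + v₁‖² ≥ R² + ‖v₁‖²}) ≤ σ, then there exists v ∈ ℝᵈ with μ({y : ‖y + v‖² ≥ R² + ‖v‖²}) = σ. -/

import Mathlib

/-!
The probability of the safety event depends continuously on the relative velocity `v`: its boundary
`{y | ‖y + v‖ = √(R² + ‖v‖²)}` is a sphere, hence Lebesgue-null, hence `μ`-null. At `v = 0` the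
event is `{‖y‖ ≥ R}`, of probability `1`, so the intermediate value theorem on the segment from `0`
to `v₁` produces a velocity of probability exactly `σ`.
-/

open MeasureTheory

section ParametricSublevel

variable {Ω X : Type*} [MeasurableSpace Ω] [TopologicalSpace X]
  [FirstCountableTopology X] {μ : Measure Ω} [IsFiniteMeasure μ] {f g : X → Ω → ℝ}

/-- Off the null set where `f x₀ = g x₀`, the inequality `f x ω ≤ g x ω` is strict at `x₀` one way
or the other, hence its truth value is locally constant in `x`. -/
theorem continuousAt_measure_setOf_le (hfc : ∀ ω, Continuous (f · ω))
    (hgc : ∀ ω, Continuous (g · ω)) (hfm : ∀ x, Measurable (f x)) (hgm : ∀ x, Measurable (g x))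
    {x₀ : X} (hnull : μ {ω | f x₀ ω = g x₀ ω} = 0) :
    ContinuousAt (fun x => μ {ω | f x ω ≤ g x ω}) x₀ := by
  refine tendsto_measure_of_ae_tendsto_indicator_of_isFiniteMeasure _
    (measurableSet_le (hfm x₀) (hgm x₀)) (fun x => measurableSet_le (hfm x) (hgm x)) ?_
  have hne : ∀ᵐ ω ∂μ, f x₀ ω ≠ g x₀ ω := by
    rw [ae_iff]
    simpa only [ne_eq, not_not] using hnull
  filter_upwards [hne] with ω hω
  rcases hω.lt_or_gt with hlt | hgt
  · filter_upwards [((hfc ω).continuousAt).eventually_lt (hgc ω).continuousAt hlt] with x hx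
    simp only [hx.le, hlt.le]
  · filter_upwards [((hgc ω).continuousAt).eventually_lt (hfc ω).continuousAt hgt] with x hx
    simp only [not_le.2 hx, not_le.2 hgt]

theorem continuous_measure_setOf_le (hfc : ∀ ω, Continuous (f · ω))
    (hgc : ∀ ω, Continuous (g · ω)) (hfm : ∀ x, Measurable (f x)) (hgm : ∀ x, Measurable (g x))
    (hnull : ∀ x, μ {ω | f x ω = g x ω} = 0) :
    Continuous fun x => μ {ω | f x ω ≤ g x ω} :=
  continuous_iff_continuousAt.2 fun _ =>
    continuousAt_measure_setOf_le hfc hgc hfm hgm (hnull _)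

end ParametricSublevel

section SafetySet

variable {E : Type*} [NormedAddCommGroup E]

def safetySet (R : ℝ) (v : E) : Set E := {y | R ^ 2 + ‖v‖ ^ 2 ≤ ‖y + v‖ ^ 2}

theorem safetySet_zero {R : ℝ} (hR : 0 ≤ R) : safetySet R (0 : E) = {y | R ≤ ‖y‖} := by
  ext y
  simp only [safetySet, Set.mem_ofPred_eq, norm_zero, add_zero, ne_eq, OfNat.ofNat_ne_zero,
    not_false_eq_true, zero_pow]
  exact pow_le_pow_iff_left₀ hR (norm_nonneg y) two_ne_zero

theorem setOf_norm_add_sq_eq_subset_sphere (v : E) (c : ℝ) :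
    {y : E | c = ‖y + v‖ ^ 2} ⊆ Metric.sphere (-v) √c := by
  rintro y rfl
  simp [sub_neg_eq_add, Real.sqrt_sq (norm_nonneg _)]

variable [NormedSpace ℝ E] [FiniteDimensional ℝ E] [Nontrivial E] [MeasurableSpace E]
  [BorelSpace E]

theorem continuous_measure_safetySet {ν μ : Measure E} [ν.IsAddHaarMeasure] [IsFiniteMeasure μ]
    (hac : μ ≪ ν) (R : ℝ) : Continuous fun v => μ (safetySet R v) :=
  continuous_measure_setOf_le (fun _ => by fun_prop) (fun _ => by fun_prop)
    (fun _ => measurable_const) (fun _ => by fun_prop)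
    fun v => hac (measure_mono_null (setOf_norm_add_sq_eq_subset_sphere v _)
      (Measure.addHaar_sphere ν _ _))

end SafetySet

theorem nontrivial_of_measure_setOf_le_norm_ne_zero {E : Type*} [NormedAddCommGroup E]
    [MeasurableSpace E] {μ : Measure E} {R : ℝ} (hR : 0 < R) (hμ : μ {y | R ≤ ‖y‖} ≠ 0) :
    Nontrivial E := by
  obtain ⟨y, hy⟩ := nonempty_of_measure_ne_zero hμ
  exact ⟨⟨y, 0, fun h => by simp [h] at hy; linarith⟩⟩

theorem stmt_8_general (d : ℕ) (R : ℝ) (hR : 0 < R)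
    (μ : Measure (EuclideanSpace ℝ (Fin d))) [IsProbabilityMeasure μ]
    (hac : μ ≪ volume) (hμ : μ {y | R ≤ ‖y‖} = 1)
    (σ : ℝ) (hσ : σ ∈ Set.Icc (0 : ℝ) 1)
    (v₁ : EuclideanSpace ℝ (Fin d))
    (h₁ : μ {y | R ^ 2 + ‖v₁‖ ^ 2 ≤ ‖y + v₁‖ ^ 2} ≤ ENNReal.ofReal σ) :
    ∃ v : EuclideanSpace ℝ (Fin d),
      μ {y | R ^ 2 + ‖v‖ ^ 2 ≤ ‖y + v‖ ^ 2} = ENNReal.ofReal σ := by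
  have : Nontrivial (EuclideanSpace ℝ (Fin d)) :=
    nontrivial_of_measure_setOf_le_norm_ne_zero (μ := μ) hR (by simp [hμ])
  have hcont : Continuous fun t : ℝ => μ (safetySet R (t • v₁)) :=
    (continuous_measure_safetySet hac R).comp (continuous_id.smul continuous_const)
  have hmem : ENNReal.ofReal σ ∈ Set.Icc (μ (safetySet R ((1 : ℝ) • v₁)))
      (μ (safetySet R ((0 : ℝ) • v₁))) := by
    rw [one_smul, zero_smul, safetySet_zero hR.le, hμ]
    exact ⟨h₁, ENNReal.ofReal_le_one.2 hσ.2⟩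
  obtain ⟨t, -, ht⟩ := intermediate_value_Icc' zero_le_one hcont.continuousOn hmem
  exact ⟨t • v₁, ht⟩

/-- Exact attainment step in the existence proof of PrSBC: if some relative velocity makes the
safety event have probability at most `σ`, then some relative velocity attains probability
exactly `σ`. -/
theorem stmt_8 (d : ℕ) (hd : 1 ≤ d) (R : ℝ) (hR : 0 < R)
    (μ : Measure (EuclideanSpace ℝ (Fin d))) [IsProbabilityMeasure μ]
    (hac : μ ≪ volume) (hμ : μ {y | R ≤ ‖y‖} = 1)
    (σ : ℝ) (hσ : σ ∈ Set.Icc (0 : ℝ) 1)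
    (v₁ : EuclideanSpace ℝ (Fin d))
    (h₁ : μ {y | R ^ 2 + ‖v₁‖ ^ 2 ≤ ‖y + v₁‖ ^ 2} ≤ ENNReal.ofReal σ) :
    ∃ v : EuclideanSpace ℝ (Fin d),
      μ {y | R ^ 2 + ‖v‖ ^ 2 ≤ ‖y + v‖ ^ 2} = ENNReal.ofReal σ :=
  stmt_8_general d R hR μ hac hμ σ hσ v₁ h₁
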